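/- Let x and y be two distinct points on the baseline and let A be an arc in the closed upper halfplane H between x and y such that A \ {x, y} ⊆ ℝ × (0,∞). Then H \ A has exactly two path-connected components, exactly one of which is bounded. -/

import Mathlib

open Set

noncomputable section

/-- The closed upper halfplane. -/
def UpperHalf : Set (ℝ × ℝ) := {p | 0 ≤ p.2}

/-- The baseline `ℝ × {0}`. -/
def Baseline : Set (ℝ × ℝ) := {p | p.2 = 0}

/-- The base of a set: its intersection with the baseline. -/
def base (X : Set (ℝ × ℝ)) : Set (ℝ × ℝ) := X ∩ Baseline

/-- `A` is an arc between `x` and `y`: the image of a continuous injective map on `[0,1]`. -/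
def IsArcBetween (A : Set (ℝ × ℝ)) (x y : ℝ × ℝ) : Prop :=
  ∃ φ : ℝ → ℝ × ℝ, ContinuousOn φ (Icc 0 1) ∧ InjOn φ (Icc 0 1) ∧
    φ 0 = x ∧ φ 1 = y ∧ A = φ '' Icc 0 1

/-- A family of sets is simple if the intersection of every nonempty subfamily is
empty or path-connected. -/
def IsSimpleFamily (F : Set (Set (ℝ × ℝ))) : Prop :=
  ∀ G ⊆ F, G.Nonempty → ⋂₀ G = ∅ ∨ IsPathConnected (⋂₀ G)

/-- A grounded set: a compact path-connected subset of the upper halfplane whose base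
is a nonempty segment of the baseline. -/
def Grounded (X : Set (ℝ × ℝ)) : Prop :=
  X ⊆ UpperHalf ∧ IsCompact X ∧ IsPathConnected X ∧
    ∃ a b : ℝ, a ≤ b ∧ base X = Icc a b ×ˢ ({0} : Set ℝ)

/-- A grounded family: a finite simple family of grounded sets with pairwise disjoint bases. -/
def GroundedFamily (F : Set (Set (ℝ × ℝ))) : Prop :=
  F.Finite ∧ (∀ X ∈ F, Grounded X) ∧ IsSimpleFamily F ∧
    F.Pairwise fun X Y => Disjoint (base X) (base Y)

/-- The intersection graph of `F` is properly colorable with `n` colors. -/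
def FamColorable (F : Set (Set (ℝ × ℝ))) (n : ℕ) : Prop :=
  ∃ c : Set (ℝ × ℝ) → ℕ, (∀ X ∈ F, c X < n) ∧
    ∀ X ∈ F, ∀ Y ∈ F, X ≠ Y → (X ∩ Y).Nonempty → c X ≠ c Y

/-- The clique number of the intersection graph of `F` is at most `k`. -/
def CliqueBdd (F : Set (Set (ℝ × ℝ))) (k : ℕ) : Prop :=
  ∀ G ⊆ F, (G.Pairwise fun X Y => (X ∩ Y).Nonempty) → G.ncard ≤ k

/-- `X ≺ Y` : the base of `X` lies entirely to the left of the base of `Y`. -/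
def Before (X Y : Set (ℝ × ℝ)) : Prop :=
  ∀ p ∈ base X, ∀ q ∈ base Y, p.1 < q.1

/-- The exterior of `X`: the unique unbounded path-connected component of
`UpperHalf \ X` (described as the set of points of `UpperHalf \ X` whose
path component therein is unbounded). -/
def extSet (X : Set (ℝ × ℝ)) : Set (ℝ × ℝ) :=
  {p | p ∈ UpperHalf \ X ∧ ¬ Bornology.IsBounded (pathComponentIn (UpperHalf \ X) p)}

/-- `X` is surrounded by `S` if it is disjoint from `S ∪ ext(S)`. -/
def SurroundedBy (X S : Set (ℝ × ℝ)) : Prop :=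
  Disjoint X (S ∪ extSet S)

/-- `cut R S`: the closure of the path-connected component of `R \ S` containing `base R`. -/
def cut (R S : Set (ℝ × ℝ)) : Set (ℝ × ℝ) :=
  closure (⋃ x ∈ base R, pathComponentIn (R \ S) x)

/-- `C` is a path-connected component of `U`. -/
def IsPathComponentOf (C U : Set (ℝ × ℝ)) : Prop :=
  ∃ p ∈ U, C = pathComponentIn U p

/-- The closed region enclosed by a Jordan curve `C`: the union of `C` with all points
whose path component in the complement of `C` is bounded. -/
def JordanRegion (C : Set (ℝ × ℝ)) : Set (ℝ × ℝ) :=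
  C ∪ {x | x ∉ C ∧ Bornology.IsBounded (pathComponentIn Cᶜ x)}

/-- `L` is a line in the plane. -/
def IsLine (L : Set (ℝ × ℝ)) : Prop :=
  ∃ a d : ℝ × ℝ, d ≠ 0 ∧ L = {p | ∃ t : ℝ, p = a + t • d}

/-- `x` is a neighbor of `R i` (within region `J`, among `R 0, …, R (m-1)`). -/
def Nbr (J : Set (ℝ × ℝ)) (m : ℕ) (R : ℕ → Set (ℝ × ℝ)) (i : ℕ) (x : ℝ × ℝ) : Prop :=
  x ∈ J ∧ ∃ A y, y ∈ R i ∧ A ⊆ J ∧ IsArcBetween A x y ∧ ∀ j < m, j ≠ i → Disjoint A (R j)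

/-- `Iset J m R i`: the points of `J` that are neighbors of both `R i` and `R (i+1)`. -/
def Iset (J : Set (ℝ × ℝ)) (m : ℕ) (R : ℕ → Set (ℝ × ℝ)) (i : ℕ) : Set (ℝ × ℝ) :=
  {x | Nbr J m R i x ∧ Nbr J m R (i + 1) x}

/-- The alternating sequence `R 0, I 0, R 1, I 1, …, R (m-1)` (0-based). -/
def seqRI (R I : ℕ → Set (ℝ × ℝ)) (n : ℕ) : Set (ℝ × ℝ) :=
  if n % 2 = 0 then R (n / 2) else I (n / 2)

end

/-!
Suppose a path `γ` in `H \ A` joined a baseline point `m` strictly between `x` and `y` to a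
point `q` above the arc `φ`. Then `(s, t) ↦ γ s - φ t` does not vanish on the unit square, so it
has a continuous logarithm there (homotopy lifting for `exp`). Along each edge of the square the
vector stays in a closed halfplane, so the change of its argument along the edge is a difference
of principal arguments; these add up to `2π` around the boundary, while the logarithm returns to
its initial value. Hence the components of `m` and of `q` differ, and the latter contains
everything far away.

Every point of `H \ A` reaches the baseline, hence `m` or the far region, because an arc does
not separate the plane: if the component `B` of `z` in the complement of the arc were bounded,
a Tietze extension of the argument of `p - z` from the arc would give a nonvanishing map on the
plane equal to `(p - z) / |p - z|` off `B`, and on a large circle around `z` this map would both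
wind once and be null-homotopic.
-/

open Complex Metric Bornology
open scoped Real

noncomputable abbrev toComplex : (ℝ × ℝ) ≃L[ℝ] ℂ := Complex.equivRealProdCLM.symm

theorem toComplex_sub_toComplex_of_snd_eq {p q : ℝ × ℝ} (h : p.2 = q.2) :
    toComplex p - toComplex q = ((p.1 - q.1 : ℝ) : ℂ) := by
  apply Complex.ext <;> simp [h]

theorem toComplex_cos_sin (α : ℝ) : toComplex (Real.cos α, Real.sin α) = exp (α * I) := by
  rw [exp_mul_I, ← ofReal_cos, ← ofReal_sin]
  exact equivRealProdCLM_symm_apply _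

theorem toComplex_sub_toComplex_ne_zero {p q : ℝ × ℝ} (h : p ≠ q) :
    toComplex p - toComplex q ≠ 0 :=
  sub_ne_zero.2 (toComplex.injective.ne h)

theorem exists_exp_lift_unitInterval (f : C(unitInterval, ℂ)) (hf : ∀ t, f t ≠ 0) :
    ∃ g : C(unitInterval, ℂ), ∀ t, exp (g t) = f t := by
  let f' : C(unitInterval, {z : ℂ // z ≠ 0}) := ⟨fun t ↦ ⟨f t, hf t⟩, by fun_prop⟩
  exact ⟨isCoveringMap_exp.liftPath f' (log (f 0)) (Subtype.ext (exp_log (hf 0)).symm),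
    fun t ↦ congrArg Subtype.val (congrFun (isCoveringMap_exp.liftPath_lifts f' _ _) t)⟩

theorem exists_exp_lift_square (F : C(unitInterval × unitInterval, ℂ)) (hF : ∀ p, F p ≠ 0) :
    ∃ G : C(unitInterval × unitInterval, ℂ), ∀ p, exp (G p) = F p := by
  obtain ⟨g, hg⟩ :=
    exists_exp_lift_unitInterval (F.comp ⟨fun t ↦ (0, t), by fun_prop⟩) fun _ ↦ hF _
  let F' : C(unitInterval × unitInterval, {z : ℂ // z ≠ 0}) :=
    ⟨fun p ↦ ⟨F p, hF p⟩, by fun_prop⟩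
  have hF' : ∀ t, F' (0, t) = ⟨exp (g t), exp_ne_zero _⟩ := fun t ↦ Subtype.ext (hg t).symm
  exact ⟨isCoveringMap_exp.liftHomotopy F' g hF', fun p ↦
    congrArg Subtype.val (congrFun (isCoveringMap_exp.liftHomotopy_lifts F' g hF') p)⟩

theorem sub_eq_sub_of_exp_eq {X : Type*} [TopologicalSpace X] [PreconnectedSpace X]
    {g₁ g₂ : X → ℂ} (h₁ : Continuous g₁) (h₂ : Continuous g₂)
    (h : ∀ x, exp (g₁ x) = exp (g₂ x)) (a b : X) : g₁ b - g₁ a = g₂ b - g₂ a := by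
  have := isCoveringMap_exp.const_of_comp (h₁.sub h₂)
    (fun a a' ↦ Subtype.ext (by simp [exp_sub, h])) b a
  simp only [Pi.sub_apply] at this
  linear_combination this

theorem continuousOn_log_of_im_nonneg : ContinuousOn log {z : ℂ | 0 ≤ z.im ∧ z ≠ 0} := by
  rintro z ⟨him, hz⟩
  by_cases hslit : z ∈ slitPlane
  · exact (continuousAt_clog hslit).continuousWithinAt
  · rw [mem_slitPlane_iff, not_or, not_lt, not_not] at hslit
    exact (continuousWithinAt_log_of_re_neg_of_im_zero
      (hslit.1.lt_of_ne fun h ↦ hz (Complex.ext h hslit.2)) hslit.2).mono fun w hw ↦ hw.1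

theorem im_sub_eq_arg_sub {X : Type*} [TopologicalSpace X] [PreconnectedSpace X]
    {f g : X → ℂ} (hf : Continuous f) (hg : Continuous g) (hfg : ∀ x, exp (g x) = f x)
    (hup : ∀ x, 0 ≤ (f x).im ∧ f x ≠ 0) (a b : X) :
    (g b).im - (g a).im = arg (f b) - arg (f a) := by
  have := sub_eq_sub_of_exp_eq hg (continuousOn_log_of_im_nonneg.comp_continuous hf hup)
    (fun x ↦ by rw [hfg, Function.comp_apply, exp_log (hup x).2]) a b
  simpa [log_im] using congrArg im this

theorem exists_eq_zero_of_eq_exp_mul_I_on_circle {H : ℝ × ℝ → ℂ} (hH : Continuous H)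
    (z : ℝ × ℝ) (R : ℝ) (hR : ∀ α : ℝ, H (z + R • (Real.cos α, Real.sin α)) = exp (α * I)) :
    ∃ p, H p = 0 := by
  by_contra! hH0
  -- `F` contracts the circle to its centre along the radii
  let F : C(unitInterval × unitInterval, ℂ) := ⟨fun st ↦ H (z + ((st.1 : ℝ) * R) •
    (Real.cos (2 * π * st.2), Real.sin (2 * π * st.2))), by fun_prop⟩
  obtain ⟨G, hG⟩ := exists_exp_lift_square F fun _ ↦ hH0 _
  have hcont : ∀ s : unitInterval, Continuous fun t : unitInterval ↦ G (s, t) := by fun_prop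
  have hcont' : ∀ t : unitInterval, Continuous fun s : unitInterval ↦ G (s, t) := by fun_prop
  have hcenter := sub_eq_sub_of_exp_eq (hcont 0) (continuous_const (y := G (0, 0)))
    (fun t ↦ by simp [hG, F]) 0 1
  have hends := sub_eq_sub_of_exp_eq (hcont' 0) (hcont' 1) (fun s ↦ by simp [hG, F]) 0 1
  have hcircle := sub_eq_sub_of_exp_eq (hcont 1) (g₂ := fun t : unitInterval ↦ 2 * π * (t : ℝ) * I)
    (by fun_prop) (fun t ↦ by simpa [hG, F] using hR (2 * π * t)) 0 1
  norm_num at hcircle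
  exact two_pi_I_ne_zero (by linear_combination -hcircle - hends + hcenter)

theorem isPathConnected_prod_of_convex {s t : Set ℝ} (hs : Convex ℝ s) (ht : Convex ℝ t)
    (hsne : s.Nonempty) (htne : t.Nonempty) : IsPathConnected (s ×ˢ t) :=
  (hs.prod ht).isPathConnected (hsne.prod htne)

theorem notMem_closedBall_zero_prod_iff {r : ℝ} {p : ℝ × ℝ} :
    p ∉ closedBall 0 r ↔ r < p.1 ∨ r < p.2 ∨ p.1 < -r ∨ p.2 < -r := by
  simp only [mem_closedBall, dist_zero_right, not_le, Prod.norm_def, Real.norm_eq_abs, lt_max_iff,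
    lt_abs, lt_neg]
  tauto

theorem isPathConnected_compl_closedBall_zero_prod (r : ℝ) :
    IsPathConnected (closedBall (0 : ℝ × ℝ) r)ᶜ := by
  have heq : (closedBall (0 : ℝ × ℝ) r)ᶜ =
      Ioi r ×ˢ univ ∪ univ ×ˢ Ioi r ∪ Iio (-r) ×ˢ univ ∪ univ ×ˢ Iio (-r) := by
    ext p
    simp only [mem_compl_iff, notMem_closedBall_zero_prod_iff, mem_union, mem_prod, mem_Ioi,
      mem_Iio, mem_univ, and_true, true_and]
    tauto
  obtain ⟨a, ha⟩ := exists_gt r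
  rw [heq]
  exact (((isPathConnected_prod_of_convex (convex_Ioi r) convex_univ nonempty_Ioi
    univ_nonempty).union (isPathConnected_prod_of_convex convex_univ (convex_Ioi r) univ_nonempty nonempty_Ioi)
      ⟨(a, a), ⟨ha, trivial⟩, ⟨trivial, ha⟩⟩).union
    (isPathConnected_prod_of_convex (convex_Iio _) convex_univ nonempty_Iio univ_nonempty)
      ⟨(-a, a), .inr ⟨trivial, ha⟩, ⟨neg_lt_neg ha, trivial⟩⟩).union
    (isPathConnected_prod_of_convex convex_univ (convex_Iio _) univ_nonempty nonempty_Iio)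
      ⟨(a, -a), .inl (.inl ⟨ha, trivial⟩), ⟨trivial, neg_lt_neg ha⟩⟩

theorem isPathConnected_upperHalf_diff_closedBall_zero (r : ℝ) :
    IsPathConnected (UpperHalf \ closedBall 0 r) := by
  have heq : UpperHalf \ closedBall 0 r =
      Ioi r ×ˢ Ici 0 ∪ univ ×ˢ (Ici 0 ∩ Ioi r) ∪ Iio (-r) ×ˢ Ici 0 := by
    ext p
    simp only [mem_sdiff, notMem_closedBall_zero_prod_iff, mem_union, mem_prod, mem_Ioi, mem_Iio,
      mem_Ici, mem_univ, mem_inter_iff, true_and, UpperHalf, mem_ofPred_eq]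
    constructor
    · rintro ⟨h0, h | h | h | h⟩
      · exact .inl (.inl ⟨h, h0⟩)
      · exact .inl (.inr ⟨h0, h⟩)
      · exact .inr ⟨h, h0⟩
      · exact .inl (.inr ⟨h0, by linarith⟩)
    · rintro ((⟨h, h0⟩ | ⟨h0, h⟩) | ⟨h, h0⟩) <;> tauto
  obtain ⟨a, ha, ha0⟩ : ∃ a, r < a ∧ 0 ≤ a := ⟨|r| + 1, by linarith [le_abs_self r], by positivity⟩
  rw [heq]
  exact ((isPathConnected_prod_of_convex (convex_Ioi r) (convex_Ici 0) nonempty_Ioi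
    nonempty_Ici).union (isPathConnected_prod_of_convex convex_univ
      ((convex_Ici 0).inter (convex_Ioi r)) univ_nonempty ⟨a, ha0, ha⟩)
      ⟨(a, a), ⟨ha, ha0⟩, ⟨trivial, ha0, ha⟩⟩).union
    (isPathConnected_prod_of_convex (convex_Iio _) (convex_Ici 0) nonempty_Iio nonempty_Ici)
      ⟨(-a, a), .inr ⟨trivial, ha0, ha⟩, ⟨neg_lt_neg ha, ha0⟩⟩

theorem not_isBounded_upperHalf_diff_closedBall_zero (r : ℝ) :
    ¬ IsBounded (UpperHalf \ closedBall 0 r) := fun h ↦ by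
  obtain ⟨R, hR⟩ := h.subset_closedBall 0
  set a := |r| + |R| + 1
  have ha : r < a ∧ R < a := ⟨by linarith [le_abs_self r, abs_nonneg R],
    by linarith [le_abs_self R, abs_nonneg r]⟩
  have hp : ((0 : ℝ), a) ∈ UpperHalf \ closedBall 0 r :=
    ⟨show (0 : ℝ) ≤ a by positivity, notMem_closedBall_zero_prod_iff.2 (.inr (.inl ha.1))⟩
  exact notMem_closedBall_zero_prod_iff.2 (.inr (.inl ha.2)) (hR hp)

theorem exists_notMem_closedBall_of_not_isBounded {X : Type*} [PseudoMetricSpace X] {C : Set X}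
    (hC : ¬ IsBounded C) (x : X) (r : ℝ) : ∃ u ∈ C, u ∉ closedBall x r :=
  not_subset.1 fun h ↦ hC (isBounded_closedBall.subset h)

theorem isPathConnected_compl_of_isBounded {K : Set (ℝ × ℝ)} (hK : IsBounded K)
    (h : ∀ z ∉ K, ¬ IsBounded (pathComponentIn Kᶜ z)) : IsPathConnected Kᶜ := by
  obtain ⟨r, hr⟩ := hK.subset_closedBall 0
  have hS := isPathConnected_compl_closedBall_zero_prod r
  have hSK : (closedBall (0 : ℝ × ℝ) r)ᶜ ⊆ Kᶜ := compl_subset_compl.2 hr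
  refine isPathConnected_iff.2 ⟨hS.nonempty.mono hSK, fun z hz w hw ↦ ?_⟩
  obtain ⟨u, hzu, hu⟩ := exists_notMem_closedBall_of_not_isBounded (h z hz) 0 r
  obtain ⟨v, hwv, hv⟩ := exists_notMem_closedBall_of_not_isBounded (h w hw) 0 r
  exact hzu.trans (((hS.joinedIn u hu v hv).mono hSK).trans hwv.symm)

theorem JoinedIn.exists_eq_zero_joinedIn_nonneg {X : Type*} [TopologicalSpace X]
    {F : Set X} {p q : X} {h : X → ℝ} (hh : Continuous h) (hpq : JoinedIn F p q)
    (hp : 0 ≤ h p) (hq : h q ≤ 0) :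
    ∃ w, h w = 0 ∧ JoinedIn (F ∩ {u | 0 ≤ h u}) p w := by
  obtain ⟨γ, hγF⟩ := hpq
  set f : ℝ → ℝ := fun s ↦ h (γ.extend s)
  have hf : Continuous f := hh.comp γ.continuous_extend
  have hivt : ∀ s, 0 ≤ s → f s ≤ 0 → ∃ s' ∈ Icc 0 s, f s' = 0 := fun s hs hs0 ↦
    intermediate_value_Icc' hs hf.continuousOn ⟨hs0, by simpa [f] using hp⟩
  have hT : IsCompact {s ∈ Icc (0 : ℝ) 1 | f s = 0} :=
    isCompact_Icc.inter_right (isClosed_eq hf continuous_const)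
  obtain ⟨τ, ⟨hτI, hτ0⟩, hτleast⟩ := hT.exists_isLeast (hivt 1 zero_le_one (by simpa [f] using hq))
  have hnonneg : ∀ s ∈ Icc 0 τ, 0 ≤ f s := fun s hs ↦ by
    by_contra! hs0
    obtain ⟨s', hs', hs'0⟩ := hivt s hs.1 hs0.le
    have : τ ≤ s' := hτleast ⟨⟨hs'.1, hs'.2.trans (hs.2.trans hτI.2)⟩, hs'0⟩
    rw [show s = τ by linarith [hs'.2, hs.2]] at hs0
    exact hs0.ne hτ0
  refine ⟨γ.extend τ, hτ0, ?_⟩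
  have hpc := ((convex_Icc 0 τ).isPathConnected (nonempty_Icc.2 hτI.1)).image γ.continuous_extend
  refine (hpc.joinedIn _ ⟨0, left_mem_Icc.2 hτI.1, γ.extend_zero⟩ _
    ⟨τ, right_mem_Icc.2 hτI.1, rfl⟩).mono ?_
  rintro _ ⟨s, hs, rfl⟩
  exact ⟨range_subset_iff.2 hγF (γ.extend_range ▸ mem_range_self s), hnonneg s hs⟩

theorem IsOpen.frontier_pathComponentIn_subset {X : Type*} [TopologicalSpace X]
    [LocallyPathConnectedSpace X] {U : Set X} (hU : IsOpen U) (z : X) :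
    frontier (pathComponentIn U z) ⊆ Uᶜ := by
  intro w hw hwU
  rw [(hU.pathComponentIn z).frontier_eq] at hw
  obtain ⟨v, hvw, hvz⟩ :=
    mem_closure_iff_nhds.mp hw.1 _ (pathComponentIn_mem_nhds (hU.mem_nhds hwU))
  exact hw.2 (hvz.trans hvw.symm)

theorem half_lt_norm_cos_sin (α : ℝ) : 1 / 2 < ‖(Real.cos α, Real.sin α)‖ := by
  by_contra! h
  rw [Prod.norm_def, max_le_iff, Real.norm_eq_abs, Real.norm_eq_abs, abs_le, abs_le] at h
  nlinarith [Real.sin_sq_add_cos_sq α]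

theorem exp_im_mul_I_eq_div_norm (w : ℂ) : exp (w.im * I) = exp w / ‖exp w‖ := by
  rw [norm_exp, ofReal_exp, ← exp_sub]
  congr 1
  linear_combination re_add_im w

noncomputable def direction (z p : ℝ × ℝ) : ℂ :=
  (toComplex p - toComplex z) / ‖toComplex p - toComplex z‖

theorem direction_ne_zero {z p : ℝ × ℝ} (h : p ≠ z) : direction z p ≠ 0 :=
  div_ne_zero (toComplex_sub_toComplex_ne_zero h) (by simpa using toComplex_sub_toComplex_ne_zero h)

theorem continuousAt_direction {z p : ℝ × ℝ} (h : p ≠ z) : ContinuousAt (direction z) p :=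
  ContinuousAt.div (by fun_prop) (by fun_prop) (by simpa using toComplex_sub_toComplex_ne_zero h)

theorem direction_add_smul_cos_sin (z : ℝ × ℝ) {R : ℝ} (hR : 0 < R) (α : ℝ) :
    direction z (z + R • (Real.cos α, Real.sin α)) = exp (α * I) := by
  rw [direction, map_add, add_sub_cancel_left, map_smul, toComplex_cos_sin, real_smul, norm_mul,
    norm_exp_ofReal_mul_I, mul_one, norm_real, Real.norm_of_nonneg hR.le,
    mul_div_cancel_left₀ _ (ofReal_ne_zero.mpr hR.ne')]

theorem exists_continuous_ne_zero_eq_direction {A B : Set (ℝ × ℝ)} (hA : IsClosed A)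
    (hB : IsOpen B) (hfr : frontier B ⊆ A) {z : ℝ × ℝ} (hz : z ∈ B) (g : C(A, ℂ))
    (hg : ∀ p : A, exp (g p) = toComplex p - toComplex z) :
    ∃ H : ℝ × ℝ → ℂ, Continuous H ∧ (∀ p, H p ≠ 0) ∧ ∀ p ∉ B, H p = direction z p := by
  classical
  obtain ⟨θ, hθ⟩ := ContinuousMap.exists_restrict_eq hA ((⟨im, continuous_im⟩ : C(ℂ, ℝ)).comp g)
  have hθA : ∀ p ∈ A, exp (θ p * I) = direction z p := fun p hp ↦ by
    rw [show θ p = (g ⟨p, hp⟩).im from congrArg (· ⟨p, hp⟩) hθ, exp_im_mul_I_eq_div_norm, hg]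
    rfl
  have hBz : ∀ p ∉ B, p ≠ z := fun p hp h ↦ hp (h ▸ hz)
  refine ⟨B.piecewise (fun p ↦ exp (θ p * I)) (direction z), ?_, fun p ↦ ?_,
    fun p hp ↦ piecewise_eq_of_notMem _ _ _ hp⟩
  · refine continuous_piecewise (fun p hp ↦ hθA p (hfr hp)) (by fun_prop) ?_
    rw [hB.isClosed_compl.closure_eq]
    exact fun p hp ↦ (continuousAt_direction (hBz p hp)).continuousWithinAt
  · by_cases hp : p ∈ B
    · simp [piecewise_eq_of_mem _ _ _ hp, exp_ne_zero]
    · simpa [piecewise_eq_of_notMem _ _ _ hp] using direction_ne_zero (hBz p hp)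

theorem not_isBounded_pathComponentIn_compl_of_exp_eq {A : Set (ℝ × ℝ)} (hA : IsClosed A)
    {z : ℝ × ℝ} (hz : z ∉ A) (g : C(A, ℂ))
    (hg : ∀ p : A, exp (g p) = toComplex p - toComplex z) :
    ¬ IsBounded (pathComponentIn Aᶜ z) := by
  intro hbdd
  have hzB : z ∈ pathComponentIn Aᶜ z := mem_pathComponentIn_self hz
  obtain ⟨H, hH, hH0, hHB⟩ := exists_continuous_ne_zero_eq_direction hA
    (hA.isOpen_compl.pathComponentIn z)
    (by simpa using hA.isOpen_compl.frontier_pathComponentIn_subset z) hzB g hg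
  obtain ⟨r, hr⟩ := hbdd.subset_closedBall z
  have hR : 0 < 2 * |r| + 2 := by positivity
  obtain ⟨p, hp⟩ := exists_eq_zero_of_eq_exp_mul_I_on_circle hH z (2 * |r| + 2) fun α ↦ by
    refine (hHB _ fun hmem ↦ ?_).trans (direction_add_smul_cos_sin z hR α)
    have := hr hmem
    rw [mem_closedBall, dist_eq_norm, add_sub_cancel_left, norm_smul,
      Real.norm_of_nonneg hR.le] at this
    nlinarith [half_lt_norm_cos_sin α, le_abs_self r]
  exact hH0 p hp

theorem exists_exp_eq_sub_on_range {x y : ℝ × ℝ} (φ : Path x y) (hφ : Function.Injective φ)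
    {z : ℝ × ℝ} (hz : z ∉ range φ) :
    ∃ g : C(range φ, ℂ), ∀ p : range φ, exp (g p) = toComplex p - toComplex z := by
  let e := (φ.continuous.isClosedEmbedding hφ).toIsEmbedding.toHomeomorph
  have hne : ∀ t, toComplex (φ t) - toComplex z ≠ 0 := fun t ↦
    toComplex_sub_toComplex_ne_zero fun h ↦ hz (h ▸ mem_range_self t)
  obtain ⟨g, hg⟩ := exists_exp_lift_unitInterval ⟨fun t ↦ toComplex (φ t) - toComplex z,
    by fun_prop⟩ hne
  refine ⟨g.comp e.symm, fun p ↦ ?_⟩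
  rw [ContinuousMap.comp_apply, hg, ContinuousMap.coe_mk]
  exact congrArg (toComplex · - toComplex z) (congrArg Subtype.val (e.apply_symm_apply p))

theorem isPathConnected_compl_range {x y : ℝ × ℝ} (φ : Path x y) (hφ : Function.Injective φ) :
    IsPathConnected (range φ)ᶜ :=
  isPathConnected_compl_of_isBounded (isCompact_range φ.continuous).isBounded fun _ hz ↦
    let ⟨g, hg⟩ := exists_exp_eq_sub_on_range φ hφ hz
    not_isBounded_pathComponentIn_compl_of_exp_eq (isCompact_range φ.continuous).isClosed hz g hg

theorem IsArcBetween.exists_path {A : Set (ℝ × ℝ)} {x y : ℝ × ℝ} (h : IsArcBetween A x y) :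
    ∃ γ : Path x y, Function.Injective γ ∧ A = range γ := by
  obtain ⟨φ, hc, hinj, h0, h1, rfl⟩ := h
  exact ⟨⟨⟨(Icc 0 1).domRestrict φ, hc.domRestrict⟩, h0, h1⟩,
    fun s t hst ↦ Subtype.ext (hinj s.2 t.2 hst), (range_domRestrict φ _).symm⟩

section UpperHalfArc

variable {x y : ℝ × ℝ} (φ : Path x y)

theorem not_joinedIn_upperHalf_diff_range (hx : x.2 = 0) (hy : y.2 = 0)
    (hφ : ∀ t, 0 ≤ (φ t).2) {c : ℝ} (hxc : x.1 < c) (hcy : c < y.1) {q : ℝ × ℝ}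
    (hq : ∀ t, (φ t).2 ≤ q.2) :
    ¬ JoinedIn (UpperHalf \ range φ) (c, 0) q := by
  rintro ⟨γ, hγ⟩
  let F : C(unitInterval × unitInterval, ℂ) :=
    ⟨fun st ↦ toComplex (γ st.1) - toComplex (φ st.2), by fun_prop⟩
  have hF : ∀ st, F st ≠ 0 := fun st ↦
    toComplex_sub_toComplex_ne_zero fun h ↦ (hγ st.1).2 (h ▸ mem_range_self _)
  have hFim : ∀ st, (F st).im = (γ st.1).2 - (φ st.2).2 := fun st ↦ by simp [F]
  obtain ⟨G, hG⟩ := exists_exp_lift_square F hF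
  have hγ2 : ∀ s, 0 ≤ (γ s).2 := fun s ↦ (hγ s).1
  -- along each edge of the square, `F` (or `-F`) stays in the closed upper halfplane
  have hbot := im_sub_eq_arg_sub (f := fun s ↦ F (s, 0)) (g := fun s ↦ G (s, 0)) (by fun_prop)
    (by fun_prop) (fun _ ↦ hG _) (fun s ↦ ⟨by simp [hFim, hx, hγ2], hF _⟩) 0 1
  have htop := im_sub_eq_arg_sub (f := fun s ↦ F (s, 1)) (g := fun s ↦ G (s, 1)) (by fun_prop)
    (by fun_prop) (fun _ ↦ hG _) (fun s ↦ ⟨by simp [hFim, hy, hγ2], hF _⟩) 0 1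
  have hright := im_sub_eq_arg_sub (f := fun t ↦ F (1, t)) (g := fun t ↦ G (1, t)) (by fun_prop)
    (by fun_prop) (fun _ ↦ hG _) (fun t ↦ ⟨by simp [hFim, hq t], hF _⟩) 0 1
  have hleft := im_sub_eq_arg_sub (f := fun t ↦ -F (0, t)) (g := fun t ↦ G (0, t) + π * I)
    (by fun_prop) (by fun_prop) (fun t ↦ by simp [exp_add, hG])
    (fun t ↦ ⟨by simp [hFim, hφ], neg_ne_zero.2 (hF _)⟩) 0 1
  simp only [F, ContinuousMap.coe_mk, Path.source, Path.target] at hbot htop hright hleft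
  have hcx : ((c, 0) : ℝ × ℝ).2 = x.2 := hx.symm
  have hcy' : ((c, 0) : ℝ × ℝ).2 = y.2 := hy.symm
  rw [toComplex_sub_toComplex_of_snd_eq hcx, arg_ofReal_of_nonneg (by simpa using hxc.le)] at hbot
  rw [toComplex_sub_toComplex_of_snd_eq hcy', arg_ofReal_of_neg (by simpa using hcy)] at htop
  rw [neg_sub, neg_sub, toComplex_sub_toComplex_of_snd_eq hcy'.symm,
    toComplex_sub_toComplex_of_snd_eq hcx.symm, arg_ofReal_of_nonneg (by simpa using hcy.le),
    arg_ofReal_of_neg (by simpa using hxc)] at hleft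
  simp only [add_im, mul_im, ofReal_re, ofReal_im, I_re, I_im] at hleft
  -- the principal arguments add up to `2π` around the boundary, the increments of `G` to `0`
  linarith [Real.pi_pos]

theorem exists_joinedIn_baseline (hφ : Function.Injective φ) (hup : range φ ⊆ UpperHalf)
    {p : ℝ × ℝ} (hp : p ∈ UpperHalf \ range φ) :
    ∃ w ∈ Baseline, JoinedIn (UpperHalf \ range φ) p w := by
  have hbelow : ((0 : ℝ), (-1 : ℝ)) ∉ range φ := fun h ↦ absurd (hup h) (by norm_num [UpperHalf])
  obtain ⟨w, hw, hpw⟩ := ((isPathConnected_compl_range φ hφ).joinedIn p hp.2 _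
    hbelow).exists_eq_zero_joinedIn_nonneg continuous_snd hp.1 (by norm_num)
  exact ⟨w, hw, hpw.mono fun u hu ↦ ⟨hu.2, hu.1⟩⟩

theorem joinedIn_of_convex_of_mk_zero_mem {U : Set (ℝ × ℝ)} {s : Set ℝ} (hs : Convex ℝ s)
    (hsU : ∀ c ∈ s, ((c, 0) : ℝ × ℝ) ∈ U) {a b : ℝ} (ha : a ∈ s) (hb : b ∈ s) :
    JoinedIn U (a, 0) (b, 0) := by
  refine ((hs.prod (convex_singleton (0 : ℝ))).isPathConnected ⟨_, mk_mem_prod ha rfl⟩).joinedIn _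
    (mk_mem_prod ha rfl) _ (mk_mem_prod hb rfl) |>.mono ?_
  rintro ⟨c, _⟩ ⟨hc, rfl⟩
  exact hsU c hc

theorem mk_zero_mem_upperHalf_diff_range (hint : ∀ p ∈ range φ, p ≠ x → p ≠ y → 0 < p.2)
    {c : ℝ} (hcx : c ≠ x.1) (hcy : c ≠ y.1) : ((c, 0) : ℝ × ℝ) ∈ UpperHalf \ range φ :=
  ⟨show (0 : ℝ) ≤ 0 from le_rfl, fun h ↦ (hint _ h (fun e ↦ hcx (congrArg Prod.fst e))
    (fun e ↦ hcy (congrArg Prod.fst e))).false⟩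

theorem joinedIn_midpoint_or_far_of_mem_baseline (hx : x.2 = 0) (hy : y.2 = 0)
    (hxy : x.1 < y.1) (hint : ∀ p ∈ range φ, p ≠ x → p ≠ y → 0 < p.2) {r : ℝ}
    (hr : range φ ⊆ closedBall 0 r) {c : ℝ} (hc : ((c, 0) : ℝ × ℝ) ∈ UpperHalf \ range φ) :
    JoinedIn (UpperHalf \ range φ) (c, 0) ((x.1 + y.1) / 2, 0) ∨
      ∃ u ∉ closedBall 0 r, JoinedIn (UpperHalf \ range φ) (c, 0) u := by
  have hcx : c ≠ x.1 := by
    rintro rfl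
    exact hc.2 ⟨0, by rw [φ.source, Prod.ext_iff]; exact ⟨rfl, hx⟩⟩
  have hcy : c ≠ y.1 := by
    rintro rfl
    exact hc.2 ⟨1, by rw [φ.target, Prod.ext_iff]; exact ⟨rfl, hy⟩⟩
  have hbase : ∀ {d : ℝ}, d ≠ x.1 → d ≠ y.1 → ((d, 0) : ℝ × ℝ) ∈ UpperHalf \ range φ :=
    mk_zero_mem_upperHalf_diff_range φ hint
  have hbound : ∀ p ∈ range φ, |p.1| ≤ r := fun p hp ↦
    (norm_fst_le p).trans (mem_closedBall_zero_iff.1 (hr hp))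
  have hxr := abs_le.1 (hbound x ⟨0, φ.source⟩)
  have hyr := abs_le.1 (hbound y ⟨1, φ.target⟩)
  rcases hcx.lt_or_gt with hlt | hgt
  · refine .inr ⟨(-r - 1, 0), notMem_closedBall_zero_prod_iff.2 (.inr (.inr (.inl (by simp)))),
      joinedIn_of_convex_of_mk_zero_mem (convex_Iio x.1)
        (fun d hd ↦ hbase (mem_Iio.1 hd).ne (by linarith [mem_Iio.1 hd])) hlt (by simp; linarith)⟩
  rcases hcy.lt_or_gt with hlt' | hgt'
  · exact .inl (joinedIn_of_convex_of_mk_zero_mem (convex_Ioo x.1 y.1)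
      (fun d hd ↦ hbase hd.1.ne' hd.2.ne) ⟨hgt, hlt'⟩ ⟨by linarith, by linarith⟩)
  · refine .inr ⟨(r + 1, 0), notMem_closedBall_zero_prod_iff.2 (.inl (by simp)),
      joinedIn_of_convex_of_mk_zero_mem (convex_Ioi y.1)
        (fun d hd ↦ hbase (by linarith [mem_Ioi.1 hd]) (mem_Ioi.1 hd).ne') hgt' (by simp; linarith)⟩

theorem exists_bounded_and_unbounded_pathComponents (hx : x.2 = 0) (hy : y.2 = 0)
    (hxy : x.1 < y.1) (hφ : Function.Injective φ) (hup : range φ ⊆ UpperHalf)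
    (hint : ∀ p ∈ range φ, p ≠ x → p ≠ y → 0 < p.2) :
    ∃ C₁ C₂ : Set (ℝ × ℝ),
      IsPathComponentOf C₁ (UpperHalf \ range φ) ∧
      IsPathComponentOf C₂ (UpperHalf \ range φ) ∧
      C₁ ≠ C₂ ∧
      (∀ C, IsPathComponentOf C (UpperHalf \ range φ) → C = C₁ ∨ C = C₂) ∧
      IsBounded C₁ ∧ ¬ IsBounded C₂ := by
  set U := UpperHalf \ range φ
  obtain ⟨r, hr⟩ := (isCompact_range φ.continuous).isBounded.subset_closedBall 0
  have hφr : ∀ t, ‖φ t‖ ≤ r := fun t ↦ mem_closedBall_zero_iff.1 (hr (mem_range_self t))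
  have hr0 : 0 ≤ r := (norm_nonneg _).trans (hφr 0)
  set S := UpperHalf \ closedBall 0 r
  have hS := isPathConnected_upperHalf_diff_closedBall_zero r
  have hSU : S ⊆ U := fun p hp ↦ ⟨hp.1, fun h ↦ hp.2 (hr h)⟩
  set m : ℝ × ℝ := ((x.1 + y.1) / 2, 0)
  set q : ℝ × ℝ := (0, r + 1)
  have hqS : q ∈ S := ⟨show (0 : ℝ) ≤ r + 1 by linarith,
    notMem_closedBall_zero_prod_iff.2 (.inr (.inl (lt_add_one r)))⟩
  have hsep : ¬ JoinedIn U m q :=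
    not_joinedIn_upperHalf_diff_range φ hx hy (fun t ↦ hup (mem_range_self t)) (by linarith)
      (by linarith) fun t ↦ by
        have := (Real.norm_eq_abs _).symm.trans_le (norm_snd_le (φ t))
        linarith [le_abs_self (φ t).2, hφr t]
  have hjoin : ∀ p ∈ U, JoinedIn U p m ∨ JoinedIn U p q := by
    intro p hp
    obtain ⟨w, hw, hpw⟩ := exists_joinedIn_baseline φ hφ hup hp
    obtain ⟨c, rfl⟩ : ∃ c : ℝ, w = (c, 0) := ⟨w.1, Prod.ext rfl hw⟩
    rcases joinedIn_midpoint_or_far_of_mem_baseline φ hx hy hxy hint hr hpw.target_mem with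
      hm | ⟨u, hu, hcu⟩
    · exact .inl (hpw.trans hm)
    · exact .inr ((hpw.trans hcu).trans (hS.joinedIn u ⟨hcu.target_mem.1, hu⟩ q hqS |>.mono hSU))
  refine ⟨pathComponentIn U m, pathComponentIn U q, ⟨m, ?_, rfl⟩, ⟨q, hSU hqS, rfl⟩,
    fun h ↦ hsep (show q ∈ pathComponentIn U m from h ▸ mem_pathComponentIn_self (hSU hqS)),
    ?_, ?_, ?_⟩
  · exact mk_zero_mem_upperHalf_diff_range φ hint (by simp; linarith) (by simp; linarith)
  · rintro _ ⟨p, hp, rfl⟩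
    exact (hjoin p hp).imp (pathComponentIn_congr ·.symm) (pathComponentIn_congr ·.symm)
  · by_contra hunb
    obtain ⟨u, hu, hur⟩ := exists_notMem_closedBall_of_not_isBounded hunb 0 r
    exact hsep (hu.trans (hS.joinedIn u ⟨(pathComponentIn_subset hu).1, hur⟩ q hqS |>.mono hSU))
  · exact fun hbdd ↦ not_isBounded_upperHalf_diff_closedBall_zero r
      (hbdd.subset (hS.subset_pathComponentIn hqS hSU))

end UpperHalfArc

/-- Jordan curve theorem for arcs in the upper halfplane with endpoints on the
baseline: the complement has exactly two path-connected components, exactly one of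
which is bounded. -/
theorem jordan_upper_halfplane
    (x y : ℝ × ℝ) (hx : x ∈ Baseline) (hy : y ∈ Baseline) (hxy : x ≠ y)
    (A : Set (ℝ × ℝ)) (hA : IsArcBetween A x y) (hAH : A ⊆ UpperHalf)
    (hint : ∀ p ∈ A, p ≠ x → p ≠ y → 0 < p.2) :
    ∃ C₁ C₂ : Set (ℝ × ℝ),
      IsPathComponentOf C₁ (UpperHalf \ A) ∧
      IsPathComponentOf C₂ (UpperHalf \ A) ∧
      C₁ ≠ C₂ ∧
      (∀ C, IsPathComponentOf C (UpperHalf \ A) → C = C₁ ∨ C = C₂) ∧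
      Bornology.IsBounded C₁ ∧ ¬ Bornology.IsBounded C₂ := by
  obtain ⟨φ, hφ, rfl⟩ := hA.exists_path
  have hne : x.1 ≠ y.1 := fun h ↦ hxy (Prod.ext h (hx.trans hy.symm))
  rcases hne.lt_or_gt with hlt | hgt
  · exact exists_bounded_and_unbounded_pathComponents φ hx hy hlt hφ hAH hint
  · rw [← φ.symm_range] at hAH hint ⊢
    exact exists_bounded_and_unbounded_pathComponents φ.symm hy hx hgt
      (hφ.comp unitInterval.symm_bijective.injective) hAH fun p hp h1 h2 ↦ hint p hp h2 h1
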